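/- arXiv:1711.06455 — 2 statements merged into one kernel-verified Lean document; each statement's English description precedes it below -/
import Mathlib

section
/- (Energy in a low-potential region) Let G be a connected weighted graph with vertices s,t, and let p = L_G^+ b_{st} denote the electrical potentials of the unit s-t flow, normalized so that p_t = 0. Let ρ > 0 and let F be the set of edges e = {a,b} with max(p_a, p_b) ≤ ρ. Then the total electrical energy of these edges satisfies sum_{e ∈ F} (b_{st}^T L_G^+ b_e)^2 / r_e ≤ ρ. -/
open Matrix

/-- The signed indicator vector `χ_x - χ_y`. -/
def incv {V : Type*} [DecidableEq V] (x y : V) : V → ℝ := fun v =>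
  (if v = x then 1 else 0) - (if v = y then 1 else 0)

/-- Weighted Laplacian of the multigraph whose edge `e` has endpoints `a e`, `b e`
and conductance `c e`. -/
noncomputable def lapM {V E : Type*} [DecidableEq V] [Fintype E]
    (a b : E → V) (c : E → ℝ) : Matrix V V ℝ :=
  ∑ e, c e • Matrix.vecMulVec (incv (a e) (b e)) (incv (a e) (b e))

/-- `M` is the Moore–Penrose pseudoinverse of `L`. -/
def IsMPInv {V : Type*} [Fintype V] (L M : Matrix V V ℝ) : Prop :=
  L * M * L = L ∧ M * L * M = M ∧ (L * M)ᵀ = L * M ∧ (M * L)ᵀ = M * L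

/-- Connectivity of a weighted graph, encoded as: the kernel of its Laplacian
consists exactly of the constant vectors. -/
def LapConnected {V : Type*} [Fintype V] (L : Matrix V V ℝ) : Prop :=
  ∀ x : V → ℝ, L.mulVec x = 0 → ∃ t : ℝ, ∀ v, x v = t

/-!
Let `p` be the potentials of the unit `s`–`t` flow and `h = min (p - p t) ρ` their truncation at
level `ρ`. Pairing `h` with `L p = χ_s - χ_t` gives
`h s - h t = ∑ₑ cₑ (h_a - h_b)(p_a - p_b)`. Every summand is nonnegative because truncation is
monotone, and on an edge with both endpoints below `ρ` it is exactly the energy `cₑ (p_a - p_b)²`.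
Hence the energy of those edges is at most `h s - h t ≤ ρ - 0`.
-/

section Incidence

variable {V : Type*} [Fintype V] [DecidableEq V]

lemma incv_dotProduct (x y : V) (v : V → ℝ) : incv x y ⬝ᵥ v = v x - v y := by
  simp [incv, dotProduct, sub_mul, Finset.sum_sub_distrib]

lemma dotProduct_incv (x y : V) (v : V → ℝ) : v ⬝ᵥ incv x y = v x - v y := by
  rw [dotProduct_comm, incv_dotProduct]

lemma sum_incv (x y : V) : ∑ v, incv x y v = 0 := by
  simp [incv, Finset.sum_sub_distrib]

end Incidence

section Laplacian

variable {V E : Type*} [DecidableEq V] [Fintype E] (a b : E → V) (c : E → ℝ)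

lemma lapM_transpose : (lapM a b c)ᵀ = lapM a b c := by
  simp only [lapM, transpose_sum, transpose_smul, transpose_vecMulVec]

lemma dotProduct_lapM_mulVec [Fintype V] (u x : V → ℝ) :
    u ⬝ᵥ lapM a b c *ᵥ x = ∑ e, c e * ((u (a e) - u (b e)) * (x (a e) - x (b e))) := by
  simp only [lapM, sum_mulVec, dotProduct_sum, smul_mulVec, vecMulVec_mulVec, dotProduct_smul,
    incv_dotProduct, dotProduct_incv, smul_eq_mul, MulOpposite.smul_eq_mul_unop,
    MulOpposite.unop_op]

end Laplacian

namespace IsMPInv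

variable {V : Type*} [Fintype V] {L M N : Matrix V V ℝ}

lemma transpose (h : IsMPInv L M) : IsMPInv Lᵀ Mᵀ := by
  obtain ⟨h₁, h₂, h₃, h₄⟩ := h
  refine ⟨?_, ?_, ?_, ?_⟩
  · rw [← transpose_mul, ← transpose_mul, ← Matrix.mul_assoc, h₁]
  · rw [← transpose_mul, ← transpose_mul, ← Matrix.mul_assoc, h₂]
  · rw [← transpose_mul, transpose_transpose, h₄]
  · rw [← transpose_mul, transpose_transpose, h₃]

lemma unique (hM : IsMPInv L M) (hN : IsMPInv L N) : M = N := by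
  obtain ⟨hM₁, hM₂, hM₃, hM₄⟩ := hM
  obtain ⟨hN₁, hN₂, hN₃, hN₄⟩ := hN
  have hLM : L * M = L * N := by
    calc L * M = (L * N * L * M)ᵀ := by rw [hN₁, hM₃]
      _ = ((L * N) * (L * M))ᵀ := by simp only [Matrix.mul_assoc]
      _ = (L * M) * (L * N) := by rw [transpose_mul, hM₃, hN₃]
      _ = L * N := by rw [← Matrix.mul_assoc, hM₁]
  have hML : M * L = N * L := by
    calc M * L = (M * (L * N * L))ᵀ := by rw [hN₁, hM₄]
      _ = ((M * L) * (N * L))ᵀ := by simp only [Matrix.mul_assoc]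
      _ = (N * L) * (M * L) := by rw [transpose_mul, hM₄, hN₄]
      _ = N * L := by rw [Matrix.mul_assoc, ← Matrix.mul_assoc L, hM₁]
  calc M = N * (L * N) := by rw [← hLM, ← Matrix.mul_assoc, ← hML, hM₂]
    _ = N := by rw [← Matrix.mul_assoc, hN₂]

lemma transpose_eq_self (hL : Lᵀ = L) (h : IsMPInv L M) : Mᵀ = M :=
  (hL ▸ h.transpose).unique h

lemma mul_comm_of_transpose_eq_self (hL : Lᵀ = L) (h : IsMPInv L M) : L * M = M * L := by
  rw [← h.2.2.1, transpose_mul, hL, h.transpose_eq_self hL]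

/-- The defect `x - L M x` lies in `ker L`, so it is constant; it is orthogonal to `x` (which sums
to zero) and to `range L = (ker L)ᗮ`, hence to itself. -/
lemma mulVec_mulVec_of_sum_eq_zero (hL : Lᵀ = L) (hconn : LapConnected L) (h : IsMPInv L M)
    {x : V → ℝ} (hx : ∑ v, x v = 0) : L *ᵥ M *ᵥ x = x := by
  set y := x - L *ᵥ M *ᵥ x
  have hLy : L *ᵥ y = 0 := by
    rw [mulVec_sub, mulVec_mulVec, mulVec_mulVec, Matrix.mul_assoc,
      mul_comm_of_transpose_eq_self hL h, ← Matrix.mul_assoc, h.1, sub_self]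
  obtain ⟨k, hk⟩ := hconn y hLy
  have hyy : y ⬝ᵥ y = 0 := by
    have hyx : y ⬝ᵥ x = 0 := by simp [dotProduct, hk, ← Finset.mul_sum, hx]
    have hyLMx : y ⬝ᵥ L *ᵥ M *ᵥ x = 0 := by
      rw [dotProduct_mulVec, ← mulVec_transpose, hL, hLy, zero_dotProduct]
    rw [dotProduct_sub, hyx, hyLMx, sub_zero]
  exact (sub_eq_zero.mp (dotProduct_self_eq_zero.mp hyy)).symm

end IsMPInv

theorem sum_energy_filter_le {V E : Type*} [Fintype V] [DecidableEq V] [Fintype E]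
    (a b : E → V) (c : E → ℝ) (hc : ∀ e, 0 ≤ c e) (s t : V) {p : V → ℝ}
    (hp : lapM a b c *ᵥ p = incv s t) {ρ : ℝ} (hρ : 0 ≤ ρ) :
    ∑ e ∈ Finset.univ.filter (fun e => max (p (a e) - p t) (p (b e) - p t) ≤ ρ),
      c e * (p (a e) - p (b e)) ^ 2 ≤ ρ := by
  set h : V → ℝ := fun v => min (p v - p t) ρ
  have hmono : Monovary h p := (monovary_self p).comp_monotone_left
    fun _ _ hxy => min_le_min_right ρ (sub_le_sub_right hxy _)
  have hpair : h s - h t = ∑ e, c e * ((h (a e) - h (b e)) * (p (a e) - p (b e))) := by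
    rw [← dotProduct_incv, ← hp, dotProduct_lapM_mulVec]
  calc _ = ∑ e ∈ Finset.univ.filter (fun e => max (p (a e) - p t) (p (b e) - p t) ≤ ρ),
        c e * ((h (a e) - h (b e)) * (p (a e) - p (b e))) := by
        refine Finset.sum_congr rfl fun e he => ?_
        obtain ⟨ha, hb⟩ := max_le_iff.mp (Finset.mem_filter.mp he).2
        simp only [h, min_eq_left ha, min_eq_left hb]
        ring
    _ ≤ ∑ e, c e * ((h (a e) - h (b e)) * (p (a e) - p (b e))) :=
        Finset.sum_le_sum_of_subset_of_nonneg (Finset.filter_subset _ _) fun e _ _ =>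
          mul_nonneg (hc e) (hmono.sub_mul_sub_nonneg _ _)
    _ = h s - h t := hpair.symm
    _ ≤ ρ := by simp [h, hρ]

/-- **Energy in a low-potential region.**  If `p` denotes the potentials of the
unit `s`–`t` electrical flow normalized so that `p t = 0`, then the total energy
of the edges whose endpoints both have potential at most `ρ` is at most `ρ`. -/
theorem low_potential_energy_bound
    {V E : Type*} [Fintype V] [DecidableEq V] [Fintype E]
    (a b : E → V) (r : E → ℝ) (hr : ∀ e, 0 < r e)
    (hconn : LapConnected (lapM a b fun e => (r e)⁻¹))
    (s t : V)
    (Lp : Matrix V V ℝ) (hLp : IsMPInv (lapM a b fun e => (r e)⁻¹) Lp)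
    (ρ : ℝ) (hρ : 0 < ρ) :
    ∑ e ∈ Finset.univ.filter (fun e : E =>
        max ((Lp.mulVec (incv s t)) (a e) - (Lp.mulVec (incv s t)) t)
            ((Lp.mulVec (incv s t)) (b e) - (Lp.mulVec (incv s t)) t) ≤ ρ),
      (incv s t ⬝ᵥ Lp.mulVec (incv (a e) (b e)))^2 / r e ≤ ρ := by
  have hL : (lapM a b fun e => (r e)⁻¹)ᵀ = lapM a b fun e => (r e)⁻¹ := lapM_transpose a b _
  set p := Lp *ᵥ incv s t
  have hp : (lapM a b fun e => (r e)⁻¹) *ᵥ p = incv s t :=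
    hLp.mulVec_mulVec_of_sum_eq_zero hL hconn (sum_incv s t)
  have hdrop : ∀ e, incv s t ⬝ᵥ Lp *ᵥ incv (a e) (b e) = p (a e) - p (b e) := fun e => by
    rw [dotProduct_mulVec, ← mulVec_transpose, hLp.transpose_eq_self hL, dotProduct_incv]
  simp_rw [hdrop, div_eq_inv_mul]
  exact sum_energy_filter_le a b _ (fun e => (inv_pos.mpr (hr e)).le) s t hp hρ.le
end

section
/- (Schur complement conductance monotonicity) Let G be a connected weighted graph and S0, S1, S2 pairwise disjoint vertex sets with S0' ⊆ S0. Let J = Schur(G, S0 ∪ S1 ∪ S2) and J' = Schur(G, S0' ∪ S1 ∪ S2) be the Schur complements of the Laplacian onto the respective vertex sets, viewed as weighted graphs. Then the total conductance of edges between S0' and S1 in J' is at most the total conductance of edges between S0 and S1 in J. -/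
set_option linter.unusedSectionVars false


open Matrix

/-- Entry `(u,w)` of the Schur complement of `L` eliminating the vertices
enumerated by `emb : C → V`, where `Ainv` is the inverse of the eliminated
block. -/
noncomputable def schurEntry {V C : Type*} [Fintype C] (L : Matrix V V ℝ)
    (emb : C → V) (Ainv : Matrix C C ℝ) (u w : V) : ℝ :=
  L u w - ∑ p : C, ∑ q : C, L u (emb p) * Ainv p q * L (emb q) w

section helpers
variable {V E : Type*} [Fintype V] [DecidableEq V] [Fintype E]
variable (a b : E → V) (c : E → ℝ)

lemma incv_dot (x y : V) (f : V → ℝ) : ∑ w, incv x y w * f w = f x - f y := by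
  simp [incv, sub_mul, Finset.sum_sub_distrib]

lemma incv_sum (x y : V) : ∑ w, incv x y w = 0 := by
  simp [incv, Finset.sum_sub_distrib]

lemma lapM_apply (u w : V) :
    lapM a b c u w = ∑ e, c e * (incv (a e) (b e) u * incv (a e) (b e) w) := by
  simp [lapM, Matrix.sum_apply, Matrix.vecMulVec_apply, mul_assoc]

lemma lapM_offdiag (hc : ∀ e, 0 ≤ c e) {u w : V} (h : u ≠ w) : lapM a b c u w ≤ 0 := by
  rw [lapM_apply]
  apply Finset.sum_nonpos
  intro e _
  have h2 : incv (a e) (b e) u * incv (a e) (b e) w ≤ 0 := by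
    unfold incv
    split_ifs <;> simp_all
  exact mul_nonpos_iff.2 (Or.inl ⟨hc e, h2⟩)

lemma lapM_mulVec (y : V → ℝ) (v : V) :
    (lapM a b c).mulVec y v = ∑ e, c e * (y (a e) - y (b e)) * incv (a e) (b e) v := by
  simp only [Matrix.mulVec, dotProduct, lapM_apply, Finset.sum_mul]
  rw [Finset.sum_comm]
  refine Finset.sum_congr rfl fun e _ => ?_
  have : ∀ w, c e * (incv (a e) (b e) v * incv (a e) (b e) w) * y w
      = c e * incv (a e) (b e) v * (incv (a e) (b e) w * y w) := by intro w; ring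
  simp only [this, ← Finset.mul_sum, incv_dot]
  ring

lemma lapM_quad (y : V → ℝ) :
    y ⬝ᵥ (lapM a b c).mulVec y = ∑ e, c e * (y (a e) - y (b e))^2 := by
  simp only [dotProduct]
  have : ∀ v, y v * (lapM a b c).mulVec y v
      = ∑ e, c e * (y (a e) - y (b e)) * (incv (a e) (b e) v * y v) := by
    intro v
    rw [lapM_mulVec, Finset.mul_sum]
    exact Finset.sum_congr rfl fun e _ => by ring
  simp only [this]
  rw [Finset.sum_comm]
  refine Finset.sum_congr rfl fun e _ => ?_
  simp only [← Finset.mul_sum, incv_dot]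
  ring

lemma lapM_mulVec_eq_zero (y : V → ℝ) (hy : ∀ e, y (a e) = y (b e)) :
    (lapM a b c).mulVec y = 0 := by
  funext v
  rw [lapM_mulVec]
  simp only [Pi.zero_apply]
  exact Finset.sum_eq_zero fun e _ => by rw [hy e]; ring

lemma lapM_col_sum (w : V) : ∑ v, lapM a b c v w = 0 := by
  simp only [lapM_apply]
  rw [Finset.sum_comm]
  refine Finset.sum_eq_zero fun e _ => ?_
  have : ∀ v, c e * (incv (a e) (b e) v * incv (a e) (b e) w)
      = c e * incv (a e) (b e) w * incv (a e) (b e) v := by intro v; ring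
  simp only [this, ← Finset.mul_sum, incv_sum, mul_zero]

lemma sum_split (X : Finset V) (F : V → ℝ) :
    ∑ w, F w = (∑ w : {v : V // v ∉ X}, F w.val) + ∑ w ∈ X, F w := by
  rw [← Finset.sum_compl_add_sum X F]
  congr 1
  exact Finset.sum_subtype Xᶜ (fun x => Finset.mem_compl) F

/-- Extension of a vector on the complement of `X` by zero. -/
def extz (X : Finset V) (z : {v : V // v ∉ X} → ℝ) : V → ℝ :=
  fun v => if hv : v ∉ X then z ⟨v, hv⟩ else 0

lemma extMul (X : Finset V) (z : {v : V // v ∉ X} → ℝ) (p : {v : V // v ∉ X}) :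
    (lapM a b c).mulVec (extz X z) p.val
      = ((lapM a b c).submatrix Subtype.val Subtype.val).mulVec z p := by
  show ∑ w, lapM a b c p.val w * extz X z w = _
  rw [sum_split X]
  have h1 : ∑ w ∈ X, lapM a b c p.val w * extz X z w = 0 :=
    Finset.sum_eq_zero fun w hw => by simp [extz, hw]
  rw [h1, add_zero]
  refine Finset.sum_congr rfl fun w _ => ?_
  simp [extz, w.property, Matrix.submatrix_apply]

lemma extQuad (X : Finset V) (z : {v : V // v ∉ X} → ℝ) :
    z ⬝ᵥ ((lapM a b c).submatrix Subtype.val Subtype.val).mulVec z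
      = ∑ e, c e * (extz X z (a e) - extz X z (b e))^2 := by
  rw [← lapM_quad a b c (extz X z)]
  show _ = ∑ v, extz X z v * (lapM a b c).mulVec (extz X z) v
  rw [sum_split X]
  have h1 : ∑ w ∈ X, extz X z w * (lapM a b c).mulVec (extz X z) w = 0 :=
    Finset.sum_eq_zero fun w hw => by simp [extz, hw]
  rw [h1, add_zero]
  refine (Finset.sum_congr rfl fun w _ => ?_).symm
  rw [extMul]
  simp [extz, w.property, dotProduct]

lemma ainv_nonneg (hc : ∀ e, 0 < c e) (hconn : LapConnected (lapM a b c))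
    (X : Finset V) (hX : X.Nonempty)
    (N : Matrix {v : V // v ∉ X} {v : V // v ∉ X} ℝ)
    (hN : (lapM a b c).submatrix Subtype.val Subtype.val * N = 1) :
    ∀ p q, 0 ≤ N p q := by
  set M := (lapM a b c).submatrix (Subtype.val : {v : V // v ∉ X} → V) Subtype.val with hM
  intro p₀ q
  set x : {v : V // v ∉ X} → ℝ := fun p => N p q with hxdef
  have hx : M.mulVec x = fun p => if p = q then (1:ℝ) else 0 := by
    funext p
    have : (M * N) p q = (1 : Matrix _ _ ℝ) p q := by rw [hN]
    simpa [Matrix.mul_apply, Matrix.mulVec, dotProduct, Matrix.one_apply] using this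
  set d : {v : V // v ∉ X} → ℝ := fun p => max (x p) 0 - x p with hddef
  have hMsym : ∀ y z : {v : V // v ∉ X} → ℝ, y ⬝ᵥ M.mulVec z = z ⬝ᵥ M.mulVec y := by
    intro y z
    have hsym : Mᵀ = M := by
      ext i j
      simp only [Matrix.transpose_apply, hM, Matrix.submatrix_apply, lapM_apply]
      exact Finset.sum_congr rfl fun e _ => by ring
    rw [Matrix.dotProduct_mulVec y M z, ← hsym, Matrix.vecMul_transpose,
      dotProduct_comm, hsym]
  have hdMx : 0 ≤ d ⬝ᵥ M.mulVec x := by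
    rw [hx]
    have : d ⬝ᵥ (fun p => if p = q then (1:ℝ) else 0) = d q := by
      simp [dotProduct, mul_ite, Finset.sum_ite_eq']
    rw [this, hddef]
    simp [le_max_right]
  have hxd : (fun p => max (x p) 0) = x + d := by funext p; simp [hddef]
  have q1 : (fun p => max (x p) 0) ⬝ᵥ M.mulVec (fun p => max (x p) 0)
      ≤ x ⬝ᵥ M.mulVec x := by
    rw [extQuad, extQuad]
    apply Finset.sum_le_sum
    intro e _
    have hE : ∀ v, extz X (fun p => max (x p) 0) v = max (extz X x v) 0 := by
      intro v
      by_cases hv : v ∉ X <;> simp [extz, hv]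
    rw [hE, hE]
    have habs := abs_max_sub_max_le_abs (extz X x (a e)) (extz X x (b e)) 0
    have : (max (extz X x (a e)) 0 - max (extz X x (b e)) 0)^2
        ≤ (extz X x (a e) - extz X x (b e))^2 := by
      have h1 := abs_nonneg (max (extz X x (a e)) 0 - max (extz X x (b e)) 0)
      nlinarith [sq_abs (max (extz X x (a e)) 0 - max (extz X x (b e)) 0),
        sq_abs (extz X x (a e) - extz X x (b e)), abs_nonneg (extz X x (a e) - extz X x (b e))]
    nlinarith [(hc e).le]
  have expand : (x + d) ⬝ᵥ M.mulVec (x + d)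
      = x ⬝ᵥ M.mulVec x + 2 * (d ⬝ᵥ M.mulVec x) + d ⬝ᵥ M.mulVec d := by
    rw [Matrix.mulVec_add]
    simp only [dotProduct_add, add_dotProduct]
    linarith [hMsym x d]
  have key : d ⬝ᵥ M.mulVec d ≤ 0 := by
    rw [hxd] at q1
    rw [expand] at q1
    linarith
  have hquad : ∑ e, c e * (extz X d (a e) - extz X d (b e))^2 = 0 := by
    have h1 : ∑ e, c e * (extz X d (a e) - extz X d (b e))^2 ≤ 0 := by
      rw [← extQuad]; exact key
    have h2 : 0 ≤ ∑ e, c e * (extz X d (a e) - extz X d (b e))^2 :=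
      Finset.sum_nonneg fun e _ => mul_nonneg (hc e).le (sq_nonneg _)
    linarith
  have hdiff : ∀ e, extz X d (a e) = extz X d (b e) := by
    intro e
    have := (Finset.sum_eq_zero_iff_of_nonneg
      (fun e _ => mul_nonneg (hc e).le (sq_nonneg _))).1 hquad e (Finset.mem_univ e)
    have h2 : (extz X d (a e) - extz X d (b e))^2 = 0 := by
      rcases mul_eq_zero.1 this with h | h
      · exact absurd h (hc e).ne'
      · exact h
    have := pow_eq_zero_iff (n := 2) (by norm_num) |>.1 h2
    linarith [this]
  obtain ⟨t, ht⟩ := hconn _ (lapM_mulVec_eq_zero a b c _ hdiff)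
  obtain ⟨v₀, hv₀⟩ := hX
  have ht0 : t = 0 := by
    have := ht v₀
    simp only [extz, dif_neg (not_not_intro hv₀)] at this
    linarith
  have hd0 : d p₀ = 0 := by
    have := ht p₀.val
    simp only [extz, dif_pos p₀.property] at this
    rw [Subtype.coe_eta] at this
    rw [this, ht0]
  have : max (x p₀) 0 = x p₀ := by
    have : max (x p₀) 0 - x p₀ = 0 := hd0
    linarith
  have h9 : 0 ≤ x p₀ := by rw [← this]; exact le_max_right _ _
  exact h9

/-- Harmonic extension of the indicator of `S1` relative to the vertex set `X`. -/
noncomputable def harm (S1 X : Finset V)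
    (Ainv : Matrix {v : V // v ∉ X} {v : V // v ∉ X} ℝ) : V → ℝ :=
  fun v => if hv : v ∉ X then
      Ainv.mulVec (fun q =>
        -((lapM a b c).mulVec (fun w => if w ∈ S1 then 1 else 0)) q.val) ⟨v, hv⟩
    else (if v ∈ S1 then 1 else 0)

lemma harm_mem (S1 X : Finset V)
    (Ainv : Matrix {v : V // v ∉ X} {v : V // v ∉ X} ℝ) {v : V} (hv : v ∈ X) :
    harm a b c S1 X Ainv v = if v ∈ S1 then 1 else 0 :=
  dif_neg (not_not_intro hv)

lemma indicator_mulVec (S1 : Finset V) (v : V) :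
    (lapM a b c).mulVec (fun w => if w ∈ S1 then (1:ℝ) else 0) v
      = ∑ w ∈ S1, lapM a b c v w := by
  simp [Matrix.mulVec, dotProduct, mul_ite, mul_one, mul_zero,
    Finset.sum_ite_mem, Finset.univ_inter]

lemma lapInd_nonpos (hc : ∀ e, 0 ≤ c e) (S1 X : Finset V) (hS1X : S1 ⊆ X)
    {v : V} (hv : v ∉ X) :
    (lapM a b c).mulVec (fun w => if w ∈ S1 then (1:ℝ) else 0) v ≤ 0 := by
  rw [indicator_mulVec]
  exact Finset.sum_nonpos fun w hw =>
    lapM_offdiag a b c hc (fun hvw => hv (hvw ▸ hS1X hw))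

lemma lapInd_eq_sum_memX (S1 X : Finset V) (hS1X : S1 ⊆ X) (u : V) :
    (lapM a b c).mulVec (fun w => if w ∈ S1 then (1:ℝ) else 0) u
      = ∑ w ∈ X, lapM a b c u w * (if w ∈ S1 then (1:ℝ) else 0) := by
  show ∑ w, lapM a b c u w * _ = _
  rw [sum_split X]
  have h1 : (∑ p : {v : V // v ∉ X},
      lapM a b c u p.val * (if p.val ∈ S1 then (1:ℝ) else 0)) = 0 :=
    Finset.sum_eq_zero fun p _ => by
      rw [if_neg (fun hp => p.property (hS1X hp)), mul_zero]
  rw [h1, zero_add]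

lemma harm_nonneg (hc : ∀ e, 0 ≤ c e) (S1 X : Finset V) (hS1X : S1 ⊆ X)
    (Ainv : Matrix {v : V // v ∉ X} {v : V // v ∉ X} ℝ)
    (hApos : ∀ p q, 0 ≤ Ainv p q) {v : V} (hv : v ∉ X) :
    0 ≤ harm a b c S1 X Ainv v := by
  rw [harm, dif_pos hv]
  refine Finset.sum_nonneg fun q _ => mul_nonneg (hApos _ _) ?_
  rw [neg_nonneg]
  exact lapInd_nonpos a b c hc S1 X hS1X q.property

lemma harm_harmonic (S1 X : Finset V) (hS1X : S1 ⊆ X)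
    (Ainv : Matrix {v : V // v ∉ X} {v : V // v ∉ X} ℝ)
    (hA : (lapM a b c).submatrix Subtype.val Subtype.val * Ainv = 1)
    {v : V} (hv : v ∉ X) :
    (lapM a b c).mulVec (harm a b c S1 X Ainv) v = 0 := by
  set g : V → ℝ := fun w => if w ∈ S1 then (1:ℝ) else 0 with hg
  set ψ : {v : V // v ∉ X} → ℝ := fun q => -((lapM a b c).mulVec g) q.val with hψ
  set z := Ainv.mulVec ψ with hz
  have hharm : ∀ p : {v : V // v ∉ X}, harm a b c S1 X Ainv p.val = z p := by
    intro p
    rw [harm, dif_pos p.property, Subtype.coe_eta]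
  show ∑ w, lapM a b c v w * harm a b c S1 X Ainv w = 0
  rw [sum_split X]
  have h2 : ∑ w ∈ X, lapM a b c v w * harm a b c S1 X Ainv w
      = ((lapM a b c).mulVec g) v := by
    rw [lapInd_eq_sum_memX a b c S1 X hS1X]
    exact Finset.sum_congr rfl fun w hw => by rw [harm_mem a b c S1 X Ainv hw]
  have h1 : (∑ p : {v : V // v ∉ X}, lapM a b c v p.val * harm a b c S1 X Ainv p.val)
      = -((lapM a b c).mulVec g) v := by
    have hMz : (∑ p : {v : V // v ∉ X}, lapM a b c v p.val * harm a b c S1 X Ainv p.val)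
        = (((lapM a b c).submatrix (Subtype.val : {x : V // x ∉ X} → V)
            (Subtype.val : {x : V // x ∉ X} → V)).mulVec z) ⟨v, hv⟩ := by
      simp only [Matrix.mulVec, dotProduct, Matrix.submatrix_apply]
      exact Finset.sum_congr rfl fun p _ => by rw [hharm]
    rw [hMz, hz, Matrix.mulVec_mulVec, hA, Matrix.one_mulVec]
  rw [h1, h2]
  ring

lemma harm_schur_sum (S1 X : Finset V) (hS1X : S1 ⊆ X)
    (Ainv : Matrix {v : V // v ∉ X} {v : V // v ∉ X} ℝ) (u : V) :
    ∑ w ∈ S1, schurEntry (lapM a b c) (Subtype.val : {v : V // v ∉ X} → V) Ainv u w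
      = (lapM a b c).mulVec (harm a b c S1 X Ainv) u := by
  set g : V → ℝ := fun w => if w ∈ S1 then (1:ℝ) else 0 with hg
  set L := lapM a b c with hL
  set ψ : {v : V // v ∉ X} → ℝ := fun q => -(L.mulVec g) q.val with hψ
  set z := Ainv.mulVec ψ with hz
  have hharm : ∀ p : {v : V // v ∉ X}, harm a b c S1 X Ainv p.val = z p := by
    intro p
    rw [harm, dif_pos p.property, Subtype.coe_eta]
  have hrhs : L.mulVec (harm a b c S1 X Ainv) u
      = (∑ p : {v : V // v ∉ X}, L u p.val * z p) + L.mulVec g u := by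
    show ∑ w, L u w * harm a b c S1 X Ainv w = _
    rw [sum_split X]
    congr 1
    · exact Finset.sum_congr rfl fun p _ => by rw [hharm]
    · rw [lapInd_eq_sum_memX a b c S1 X hS1X]
      exact Finset.sum_congr rfl fun w hw => by rw [harm_mem a b c S1 X Ainv hw]
  rw [hrhs]
  unfold schurEntry
  rw [Finset.sum_sub_distrib]
  have h1 : ∑ w ∈ S1, L u w = L.mulVec g u := (indicator_mulVec a b c S1 u).symm
  have h2 : ∑ w ∈ S1, ∑ p : {v : V // v ∉ X}, ∑ q : {v : V // v ∉ X},
        L u p.val * Ainv p q * L q.val w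
      = -(∑ p : {v : V // v ∉ X}, L u p.val * z p) := by
    rw [Finset.sum_comm]
    rw [← Finset.sum_neg_distrib]
    refine Finset.sum_congr rfl fun p _ => ?_
    rw [Finset.sum_comm]
    have : ∀ q : {v : V // v ∉ X}, ∑ w ∈ S1, L u p.val * Ainv p q * L q.val w
        = L u p.val * Ainv p q * L.mulVec g q.val := by
      intro q
      rw [← Finset.mul_sum, indicator_mulVec]
    simp only [this]
    have hzp : z p = ∑ q, Ainv p q * ψ q := rfl
    rw [hzp, Finset.mul_sum, ← Finset.sum_neg_distrib]
    refine Finset.sum_congr rfl fun q _ => ?_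
    rw [hψ]
    ring
  rw [h1, h2]
  ring

lemma mul_nonneg_of_nonpos_nonpos' {x y : ℝ} (hx : x ≤ 0) (hy : y ≤ 0) : 0 ≤ x * y := by
  nlinarith

end helpers

/-- **Schur complement conductance monotonicity.**  The total conductance of
edges between `S0'` and `S1` in `Schur(G, S0' ∪ S1 ∪ S2)` is at most the total
conductance of edges between `S0` and `S1` in `Schur(G, S0 ∪ S1 ∪ S2)`.
(In a weighted-graph Laplacian the conductance of the edge `{u,w}` is the
negative of the `(u,w)` entry.) -/
theorem schur_complement_conductance_monotone
    {V E : Type*} [Fintype V] [DecidableEq V] [Fintype E]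
    (a b : E → V) (c : E → ℝ) (hc : ∀ e, 0 < c e)
    (hconn : LapConnected (lapM a b c))
    (S0 S1 S2 S0' : Finset V)
    (h01 : Disjoint S0 S1) (h02 : Disjoint S0 S2) (h12 : Disjoint S1 S2)
    (hsub : S0' ⊆ S0)
    (Ainv1 : Matrix {v : V // v ∉ S0 ∪ S1 ∪ S2} {v : V // v ∉ S0 ∪ S1 ∪ S2} ℝ)
    (hA1 : (lapM a b c).submatrix
        (Subtype.val : {v : V // v ∉ S0 ∪ S1 ∪ S2} → V) (Subtype.val : {v : V // v ∉ S0 ∪ S1 ∪ S2} → V) * Ainv1 = 1)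
    (hA1' : Ainv1 * (lapM a b c).submatrix
        (Subtype.val : {v : V // v ∉ S0 ∪ S1 ∪ S2} → V) (Subtype.val : {v : V // v ∉ S0 ∪ S1 ∪ S2} → V) = 1)
    (Ainv2 : Matrix {v : V // v ∉ S0' ∪ S1 ∪ S2} {v : V // v ∉ S0' ∪ S1 ∪ S2} ℝ)
    (hA2 : (lapM a b c).submatrix
        (Subtype.val : {v : V // v ∉ S0' ∪ S1 ∪ S2} → V) (Subtype.val : {v : V // v ∉ S0' ∪ S1 ∪ S2} → V) * Ainv2 = 1)
    (hA2' : Ainv2 * (lapM a b c).submatrix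
        (Subtype.val : {v : V // v ∉ S0' ∪ S1 ∪ S2} → V) (Subtype.val : {v : V // v ∉ S0' ∪ S1 ∪ S2} → V) = 1) :
    ∑ u ∈ S0', ∑ w ∈ S1,
        -(schurEntry (lapM a b c)
            (Subtype.val : {v : V // v ∉ S0' ∪ S1 ∪ S2} → V) Ainv2 u w)
      ≤ ∑ u ∈ S0, ∑ w ∈ S1,
        -(schurEntry (lapM a b c)
            (Subtype.val : {v : V // v ∉ S0 ∪ S1 ∪ S2} → V) Ainv1 u w) := by
  rcases S1.eq_empty_or_nonempty with hS1e | hS1ne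
  · subst hS1e; simp
  have hS1X : S1 ⊆ (S0 ∪ S1 ∪ S2) :=
    Finset.Subset.trans Finset.subset_union_right Finset.subset_union_left
  have hS1X' : S1 ⊆ (S0' ∪ S1 ∪ S2) :=
    Finset.Subset.trans Finset.subset_union_right Finset.subset_union_left
  have hX'X : (S0' ∪ S1 ∪ S2) ⊆ (S0 ∪ S1 ∪ S2) :=
    Finset.union_subset_union (Finset.union_subset_union hsub (le_refl S1)) (le_refl S2)
  have hXne : (S0 ∪ S1 ∪ S2).Nonempty := ⟨hS1ne.choose, hS1X hS1ne.choose_spec⟩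
  have hX'ne : (S0' ∪ S1 ∪ S2).Nonempty := ⟨hS1ne.choose, hS1X' hS1ne.choose_spec⟩
  have hN1 : ∀ p q, 0 ≤ Ainv1 p q := ainv_nonneg a b c hc hconn (S0 ∪ S1 ∪ S2) hXne Ainv1 hA1
  have hN2 : ∀ p q, 0 ≤ Ainv2 p q := ainv_nonneg a b c hc hconn (S0' ∪ S1 ∪ S2) hX'ne Ainv2 hA2
  set F₁ : V → ℝ := harm a b c S1 (S0 ∪ S1 ∪ S2) Ainv1 with hF₁
  set F₂ : V → ℝ := harm a b c S1 (S0' ∪ S1 ∪ S2) Ainv2 with hF₂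
  set dv : V → ℝ := fun v => F₁ v - F₂ v with hdv
  have hharm1_zero : ∀ v, v ∉ (S0 ∪ S1 ∪ S2) → (lapM a b c).mulVec F₁ v = 0 := fun v hv =>
    harm_harmonic a b c S1 (S0 ∪ S1 ∪ S2) hS1X Ainv1 hA1 hv
  have hharm2_zero : ∀ v, v ∉ (S0' ∪ S1 ∪ S2) → (lapM a b c).mulVec F₂ v = 0 := fun v hv =>
    harm_harmonic a b c S1 (S0' ∪ S1 ∪ S2) hS1X' Ainv2 hA2 hv
  have hmv : ∀ v, (lapM a b c).mulVec dv v
      = (lapM a b c).mulVec F₁ v - (lapM a b c).mulVec F₂ v := by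
    intro v
    simp only [Matrix.mulVec, dotProduct]
    rw [← Finset.sum_sub_distrib]
    refine Finset.sum_congr rfl fun w _ => ?_
    show lapM a b c v w * (F₁ w - F₂ w) = _
    ring
  have hdX' : ∀ w ∈ (S0' ∪ S1 ∪ S2), dv w = 0 := by
    intro w hw
    show F₁ w - F₂ w = 0
    rw [hF₁, hF₂, harm_mem a b c S1 (S0 ∪ S1 ∪ S2) Ainv1 (hX'X hw), harm_mem a b c S1 (S0' ∪ S1 ∪ S2) Ainv2 hw,
      sub_self]
  have hdX : ∀ w ∈ (S0 ∪ S1 ∪ S2), dv w ≤ 0 := by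
    intro w hw
    by_cases hw' : w ∈ (S0' ∪ S1 ∪ S2)
    · rw [hdX' w hw']
    · show F₁ w - F₂ w ≤ 0
      have h1 : F₁ w = 0 := by
        rw [hF₁, harm_mem a b c S1 (S0 ∪ S1 ∪ S2) Ainv1 hw, if_neg (fun hws => hw' (hS1X' hws))]
      have h2 : 0 ≤ F₂ w :=
        harm_nonneg a b c (fun e => (hc e).le) S1 (S0' ∪ S1 ∪ S2) hS1X' Ainv2 hN2 hw'
      linarith
  have hdC : ∀ p : {v : V // v ∉ (S0 ∪ S1 ∪ S2)}, dv p.val ≤ 0 := by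
    set uvec : {v : V // v ∉ (S0 ∪ S1 ∪ S2)} → ℝ := fun p => dv p.val with huvec
    set M₁ := (lapM a b c).submatrix (Subtype.val : {v : V // v ∉ (S0 ∪ S1 ∪ S2)} → V)
      (Subtype.val : {v : V // v ∉ (S0 ∪ S1 ∪ S2)} → V) with hM₁
    have hMu : ∀ p, M₁.mulVec uvec p = -(∑ w ∈ (S0 ∪ S1 ∪ S2), lapM a b c p.val w * dv w) := by
      intro p
      have h0 : (lapM a b c).mulVec dv p.val = 0 := by
        rw [hmv, hharm1_zero p.val p.property,
          hharm2_zero p.val (fun hmem => p.property (hX'X hmem)), sub_zero]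
      have hsplit : (lapM a b c).mulVec dv p.val
          = M₁.mulVec uvec p + ∑ w ∈ (S0 ∪ S1 ∪ S2), lapM a b c p.val w * dv w := by
        show ∑ w, lapM a b c p.val w * dv w = _
        rw [sum_split (S0 ∪ S1 ∪ S2)]
        congr 1
      linarith [hsplit, h0]
    intro p
    have hup : uvec p = ∑ q, Ainv1 p q * M₁.mulVec uvec q := by
      have h1 : (Ainv1 * M₁).mulVec uvec = uvec := by rw [hA1', Matrix.one_mulVec]
      conv_lhs => rw [← h1]
      rw [← Matrix.mulVec_mulVec]
      rfl
    have hle : uvec p ≤ 0 := by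
      rw [hup]
      refine Finset.sum_nonpos fun q _ => ?_
      have h2 : M₁.mulVec uvec q ≤ 0 := by
        rw [hMu]
        have h3 : 0 ≤ ∑ w ∈ (S0 ∪ S1 ∪ S2), lapM a b c q.val w * dv w :=
          Finset.sum_nonneg fun w hw => mul_nonneg_of_nonpos_nonpos'
            (lapM_offdiag a b c (fun e => (hc e).le)
              (fun hqw => q.property (hqw.symm ▸ hw)))
            (hdX w hw)
        linarith
      exact mul_nonpos_iff.2 (Or.inl ⟨hN1 p q, h2⟩)
    exact hle
  have hdall : ∀ w, dv w ≤ 0 := fun w => by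
    by_cases hw : w ∈ (S0 ∪ S1 ∪ S2)
    · exact hdX w hw
    · exact hdC ⟨w, hw⟩
  have hLd_nonneg : ∀ v ∈ (S0' ∪ S1 ∪ S2), 0 ≤ (lapM a b c).mulVec dv v := by
    intro v hv
    show 0 ≤ ∑ w, lapM a b c v w * dv w
    refine Finset.sum_nonneg fun w _ => ?_
    by_cases hw : w ∈ (S0' ∪ S1 ∪ S2)
    · rw [hdX' w hw, mul_zero]
    · exact mul_nonneg_of_nonpos_nonpos'
        (lapM_offdiag a b c (fun e => (hc e).le) (fun hvw => hw (hvw ▸ hv)))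
        (hdall w)
  have hTotal : ∑ v, (lapM a b c).mulVec dv v = 0 := by
    simp only [Matrix.mulVec, dotProduct]
    rw [Finset.sum_comm]
    refine Finset.sum_eq_zero fun w _ => ?_
    rw [← Finset.sum_mul, lapM_col_sum, zero_mul]
  have hsumX : ∑ v ∈ (S0 ∪ S1 ∪ S2), (lapM a b c).mulVec dv v = 0 := by
    have hsp := sum_split (S0 ∪ S1 ∪ S2) (fun v => (lapM a b c).mulVec dv v)
    have hC0 : (∑ p : {v : V // v ∉ (S0 ∪ S1 ∪ S2)}, (lapM a b c).mulVec dv p.val) = 0 :=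
      Finset.sum_eq_zero fun p _ => by
        rw [hmv, hharm1_zero _ p.property,
          hharm2_zero _ (fun hm => p.property (hX'X hm)), sub_zero]
    rw [hTotal, hC0, zero_add] at hsp
    exact hsp.symm
  have hsplit3 : ∑ v ∈ (S0 ∪ S1 ∪ S2), (lapM a b c).mulVec dv v
      = ∑ v ∈ S0, (lapM a b c).mulVec dv v + ∑ v ∈ S1, (lapM a b c).mulVec dv v
        + ∑ v ∈ S2, (lapM a b c).mulVec dv v := by
    have hd2 : Disjoint (S0 ∪ S1) S2 := Finset.disjoint_union_left.2 ⟨h02, h12⟩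
    rw [Finset.sum_union hd2, Finset.sum_union h01]
  have hS0np : ∑ v ∈ S0, (lapM a b c).mulVec dv v ≤ 0 := by
    have h1 : 0 ≤ ∑ v ∈ S1, (lapM a b c).mulVec dv v :=
      Finset.sum_nonneg fun v hv => hLd_nonneg v (hS1X' hv)
    have h2 : 0 ≤ ∑ v ∈ S2, (lapM a b c).mulVec dv v :=
      Finset.sum_nonneg fun v hv => hLd_nonneg v (Finset.mem_union_right _ hv)
    linarith [hsumX, hsplit3]
  have eA : ∑ u ∈ S0', ∑ w ∈ S1,
        -(schurEntry (lapM a b c) (Subtype.val : {v : V // v ∉ (S0' ∪ S1 ∪ S2)} → V) Ainv2 u w)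
      = ∑ u ∈ S0', -((lapM a b c).mulVec F₂ u) := by
    refine Finset.sum_congr rfl fun u _ => ?_
    rw [Finset.sum_neg_distrib, harm_schur_sum a b c S1 (S0' ∪ S1 ∪ S2) hS1X' Ainv2 u, ← hF₂]
  have eB : ∑ u ∈ S0, ∑ w ∈ S1,
        -(schurEntry (lapM a b c) (Subtype.val : {v : V // v ∉ (S0 ∪ S1 ∪ S2)} → V) Ainv1 u w)
      = ∑ u ∈ S0, -((lapM a b c).mulVec F₁ u) := by
    refine Finset.sum_congr rfl fun u _ => ?_
    rw [Finset.sum_neg_distrib, harm_schur_sum a b c S1 (S0 ∪ S1 ∪ S2) hS1X Ainv1 u, ← hF₁]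
  rw [eA, eB]
  have hstep1 : ∑ u ∈ S0', -((lapM a b c).mulVec F₂ u)
      = ∑ u ∈ S0, -((lapM a b c).mulVec F₂ u) := by
    rw [← Finset.sum_sdiff hsub]
    have hz : ∑ u ∈ S0 \ S0', -((lapM a b c).mulVec F₂ u) = 0 := by
      refine Finset.sum_eq_zero fun u hu => ?_
      have huS0 := (Finset.mem_sdiff.1 hu).1
      have huS0' := (Finset.mem_sdiff.1 hu).2
      have hnot : u ∉ (S0' ∪ S1 ∪ S2) := by
        intro hm
        rcases Finset.mem_union.1 hm with hm' | hm2
        · rcases Finset.mem_union.1 hm' with hm0 | hm1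
          · exact huS0' hm0
          · exact Finset.disjoint_left.1 h01 huS0 hm1
        · exact Finset.disjoint_left.1 h02 huS0 hm2
      rw [hharm2_zero u hnot, neg_zero]
    rw [hz, zero_add]
  rw [hstep1]
  have hptw : ∀ u, -((lapM a b c).mulVec F₂ u)
      = -((lapM a b c).mulVec F₁ u) + (lapM a b c).mulVec dv u := by
    intro u
    rw [hmv]
    ring
  calc ∑ u ∈ S0, -((lapM a b c).mulVec F₂ u)
      = ∑ u ∈ S0, (-((lapM a b c).mulVec F₁ u) + (lapM a b c).mulVec dv u) :=
        Finset.sum_congr rfl fun u _ => hptw u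
    _ = ∑ u ∈ S0, -((lapM a b c).mulVec F₁ u) + ∑ u ∈ S0, (lapM a b c).mulVec dv u :=
        Finset.sum_add_distrib
    _ ≤ ∑ u ∈ S0, -((lapM a b c).mulVec F₁ u) := by linarith [hS0np]
end
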